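/- In a sharply 2-transitive permutation group in which point stabilizers contain involutions, any two distinct involutions have product of the same order; more precisely, all products ij of distinct involutions i ≠ j are conjugate in G. -/

import Mathlib

/-!
In a sharply 2-transitive group, a nontrivial element fixes at most one point, and an element
is determined by the images of two distinct points. Consequently any two involutions are
conjugate (map a pair swapped by one onto a pair swapped by the other), so all involutions have
fixed points once one does, and an involution is determined by its fixed point. Given involutions
`i ≠ j` and `i' ≠ j'`, their fixed points form pairs `(a, b)` and `(a', b')` of distinct points;
the element `g` with `g • a = a'` and `g • b = b'` then conjugates `i` to `i'` and `j` to `j'`.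
-/

def SharplyTwoTransitive (G X : Type*) [Group G] [MulAction G X] : Prop :=
  ∀ x y x' y' : X, x ≠ y → x' ≠ y' → ∃! g : G, g • x = x' ∧ g • y = y'

section

variable {G X : Type*} [Group G] [MulAction G X]

lemma ne_one_of_orderOf_eq_two {p : G} (hp : orderOf p = 2) : p ≠ 1 := by
  rintro rfl
  simp at hp

lemma smul_smul_of_orderOf_eq_two {p : G} (hp : orderOf p = 2) (u : X) : p • p • u = u := by
  rw [smul_smul, ← sq, ← hp, pow_orderOf_eq_one, one_smul]

lemma conj_smul_smul (g p : G) (x : X) : (g * p * g⁻¹) • g • x = g • p • x := by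
  simp [mul_smul]

namespace SharplyTwoTransitive

lemma eq_one_of_smul_eq_self (h2 : SharplyTwoTransitive G X) {g : G} {u v : X} (huv : u ≠ v)
    (hu : g • u = u) (hv : g • v = v) : g = 1 :=
  (h2 u v u v huv huv).unique ⟨hu, hv⟩ ⟨one_smul G u, one_smul G v⟩

lemma exists_smul_ne (h2 : SharplyTwoTransitive G X) (hX : ∃ x y : X, x ≠ y) {g : G}
    (hg : g ≠ 1) : ∃ u : X, g • u ≠ u := by
  obtain ⟨x, y, hxy⟩ := hX
  by_contra! hfix
  exact hg (h2.eq_one_of_smul_eq_self hxy (hfix x) (hfix y))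

lemma conj_eq_of_swap (h2 : SharplyTwoTransitive G X) {p q g : G} {u v : X} (huv : u ≠ v)
    (hpu : p • u = v) (hpv : p • v = u) (hqu : q • g • u = g • v) (hqv : q • g • v = g • u) :
    g * p * g⁻¹ = q := by
  have hguv : g • u ≠ g • v := (MulAction.injective g).ne huv
  refine (h2 (g • u) (g • v) (g • v) (g • u) hguv hguv.symm).unique ?_ ⟨hqu, hqv⟩
  rw [conj_smul_smul, conj_smul_smul, hpu, hpv]
  exact ⟨rfl, rfl⟩

lemma isConj_of_orderOf_eq_two (h2 : SharplyTwoTransitive G X) (hX : ∃ x y : X, x ≠ y)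
    {p q : G} (hp : orderOf p = 2) (hq : orderOf q = 2) : IsConj p q := by
  obtain ⟨u, hu⟩ := h2.exists_smul_ne hX (ne_one_of_orderOf_eq_two hp)
  obtain ⟨w, hw⟩ := h2.exists_smul_ne hX (ne_one_of_orderOf_eq_two hq)
  obtain ⟨g, ⟨hgu, hgpu⟩, -⟩ := h2 u (p • u) w (q • w) hu.symm hw.symm
  refine isConj_iff.2 ⟨g, h2.conj_eq_of_swap hu.symm rfl (smul_smul_of_orderOf_eq_two hp u) ?_ ?_⟩
  · rw [hgu, hgpu]
  · rw [hgpu, hgu, smul_smul_of_orderOf_eq_two hq]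

lemma exists_smul_eq_self_of_orderOf_eq_two (h2 : SharplyTwoTransitive G X)
    (hX : ∃ x y : X, x ≠ y) (hstab : ∃ (x : X) (i : G), orderOf i = 2 ∧ i • x = x)
    {p : G} (hp : orderOf p = 2) : ∃ x : X, p • x = x := by
  obtain ⟨x, i, hi, hix⟩ := hstab
  obtain ⟨g, rfl⟩ := isConj_iff.1 (h2.isConj_of_orderOf_eq_two hX hi hp)
  exact ⟨g • x, by rw [conj_smul_smul, hix]⟩

/-- The element `h` below fixes `u` and conjugates `p` to `q`, so it maps the fixed point `x`
of `p` to a fixed point of `q`, which can only be `x`; fixing two points, `h` is trivial. -/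
lemma eq_of_orderOf_eq_two_of_smul_eq_self (h2 : SharplyTwoTransitive G X)
    (hX : ∃ x y : X, x ≠ y) {p q : G} (hp : orderOf p = 2) (hq : orderOf q = 2) {x : X}
    (hpx : p • x = x) (hqx : q • x = x) : p = q := by
  obtain ⟨u, hux⟩ : ∃ u : X, u ≠ x := by
    obtain ⟨y, z, hyz⟩ := hX
    by_cases hy : y = x
    · exact ⟨z, hy ▸ hyz.symm⟩
    · exact ⟨y, hy⟩
  have hpu : p • u ≠ u := fun h ↦ ne_one_of_orderOf_eq_two hp (h2.eq_one_of_smul_eq_self hux h hpx)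
  have hqu : q • u ≠ u := fun h ↦ ne_one_of_orderOf_eq_two hq (h2.eq_one_of_smul_eq_self hux h hqx)
  obtain ⟨h, ⟨hhu, hhpu⟩, -⟩ := h2 u (p • u) u (q • u) hpu.symm hqu.symm
  have hconj : h * p * h⁻¹ = q := by
    refine h2.conj_eq_of_swap hpu.symm rfl (smul_smul_of_orderOf_eq_two hp u) ?_ ?_
    · rw [hhu, hhpu]
    · rw [hhpu, hhu, smul_smul_of_orderOf_eq_two hq]
  have hhx : h • x = x := by
    by_contra hne
    refine ne_one_of_orderOf_eq_two hq (h2.eq_one_of_smul_eq_self hne ?_ hqx)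
    rw [← hconj, conj_smul_smul, hpx]
  obtain rfl : h = 1 := h2.eq_one_of_smul_eq_self hux hhu hhx
  simpa using hconj

lemma conj_eq_of_smul_eq_self (h2 : SharplyTwoTransitive G X) (hX : ∃ x y : X, x ≠ y)
    {p q : G} (hp : orderOf p = 2) (hq : orderOf q = 2) {g : G} {x : X} (hpx : p • x = x)
    (hqx : q • g • x = g • x) : g * p * g⁻¹ = q :=
  h2.eq_of_orderOf_eq_two_of_smul_eq_self hX ((SemiconjBy.conj_mk g p).orderOf_eq g ▸ hp) hq
    (by rw [conj_smul_smul, hpx]) hqx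

end SharplyTwoTransitive

end

/-- In a sharply 2-transitive group whose point stabilizers contain involutions,
all products of two distinct involutions are conjugate. -/
theorem stmt_13 {G X : Type*} [Group G] [MulAction G X]
    (hX : ∃ x y : X, x ≠ y) (h2 : SharplyTwoTransitive G X)
    (hstab : ∃ (x : X) (i : G), orderOf i = 2 ∧ i • x = x) :
    ∀ i j i' j' : G, orderOf i = 2 → orderOf j = 2 → orderOf i' = 2 → orderOf j' = 2 →
      i ≠ j → i' ≠ j' → IsConj (i * j) (i' * j') := by
  intro i j i' j' hi hj hi' hj' hij hij'
  obtain ⟨a, ha⟩ := h2.exists_smul_eq_self_of_orderOf_eq_two hX hstab hi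
  obtain ⟨b, hb⟩ := h2.exists_smul_eq_self_of_orderOf_eq_two hX hstab hj
  obtain ⟨a', ha'⟩ := h2.exists_smul_eq_self_of_orderOf_eq_two hX hstab hi'
  obtain ⟨b', hb'⟩ := h2.exists_smul_eq_self_of_orderOf_eq_two hX hstab hj'
  have hab : a ≠ b := by
    rintro rfl
    exact hij (h2.eq_of_orderOf_eq_two_of_smul_eq_self hX hi hj ha hb)
  have hab' : a' ≠ b' := by
    rintro rfl
    exact hij' (h2.eq_of_orderOf_eq_two_of_smul_eq_self hX hi' hj' ha' hb')
  obtain ⟨g, ⟨rfl, rfl⟩, -⟩ := h2 a b a' b' hab hab'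
  refine isConj_iff.2 ⟨g, ?_⟩
  rw [← conj_mul, h2.conj_eq_of_smul_eq_self hX hi hi' ha ha',
    h2.conj_eq_of_smul_eq_self hX hj hj' hb hb']
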